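/- arXiv:1701.05841 — 2 statements merged into one kernel-verified Lean document; each statement's English description precedes it below -/
import Mathlib

section
/- Let ∂₁, ∂₂ be derivations on ℝ. Define [∂₁:∂₂] : ℂ → ℂ by [∂₁:∂₂](x+iy) = (∂₁(x) − ∂₂(y)) + i(∂₁(y) + ∂₂(x)) for x, y ∈ ℝ. Then [∂₁:∂₂] is a derivation on ℂ, i.e. it is additive and satisfies the Leibniz rule [∂₁:∂₂](zw) = z·[∂₁:∂₂](w) + w·[∂₁:∂₂](z). -/
open Complex

/-- A derivation on a commutative ring: additive and Leibniz. -/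
def IsDerivation {R : Type*} [CommRing R] (d : R → R) : Prop :=
  (∀ a b : R, d (a + b) = d a + d b) ∧ (∀ a b : R, d (a * b) = a * d b + b * d a)

/-- The map `[∂₁:∂₂]` on `ℂ` built from two maps on `ℝ`. -/
noncomputable def bracket (d₁ d₂ : ℝ → ℝ) (z : ℂ) : ℂ :=
  (d₁ z.re - d₂ z.im : ℝ) + (d₁ z.im + d₂ z.re : ℝ) * I

theorem IsDerivation.map_sub {R : Type*} [CommRing R] {d : R → R} (h : IsDerivation d)
    (a b : R) : d (a - b) = d a - d b :=
  (AddMonoidHom.mk' d h.1).map_sub a b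

section Bracket

variable {d₁ d₂ : ℝ → ℝ}

@[simp]
theorem bracket_re (z : ℂ) : (bracket d₁ d₂ z).re = d₁ z.re - d₂ z.im := by
  simp [bracket]

@[simp]
theorem bracket_im (z : ℂ) : (bracket d₁ d₂ z).im = d₁ z.im + d₂ z.re := by
  simp [bracket]

theorem bracket_add (h₁ : ∀ a b, d₁ (a + b) = d₁ a + d₁ b)
    (h₂ : ∀ a b, d₂ (a + b) = d₂ a + d₂ b) (z w : ℂ) :
    bracket d₁ d₂ (z + w) = bracket d₁ d₂ z + bracket d₁ d₂ w := by
  apply Complex.ext <;> simp only [bracket_re, bracket_im, add_re, add_im, h₁, h₂] <;> ring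

theorem bracket_mul (h₁ : IsDerivation d₁) (h₂ : IsDerivation d₂) (z w : ℂ) :
    bracket d₁ d₂ (z * w) = z * bracket d₁ d₂ w + w * bracket d₁ d₂ z := by
  apply Complex.ext <;>
    simp only [bracket_re, bracket_im, add_re, add_im, mul_re, mul_im, h₁.1, h₂.1,
      h₁.map_sub, h₂.map_sub, h₁.2, h₂.2] <;> ring

end Bracket

theorem stmt5 (d₁ d₂ : ℝ → ℝ) (h₁ : IsDerivation d₁) (h₂ : IsDerivation d₂) :
    IsDerivation (bracket d₁ d₂) :=
  ⟨bracket_add h₁.1 h₂.1, bracket_mul h₁ h₂⟩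
end

section
/- Let (K, D, j, j′, j″, j‴) be a j-field and C ⊆ K a jcl-closed set. Let z ∈ D with j‴(z) ≠ 0. If any one of j(z), j′(z), j″(z) lies in C, then z ∈ C. -/
/-!
If a `j`-derivation `d` kills `j z`, then `j' z * d z = 0`, so either `d z = 0` or `j' z = 0`, and
in the latter case `d (j' z) = d 0 = 0`. Walking down the chain `j z, j' z, j'' z` in this way,
`d z = 0` unless `j''' z = 0`. Hence `z` lies in the common kernel `jcl C = C`.
-/

variable {K : Type*} [Field K]

/-- A `j`-derivation from `K` to itself, relative to `D ⊆ K` and the functions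
`j, j′, j″, j‴`. -/
def IsJDerivation (D : Set K) (j j' j'' j''' : K → K) (d : K → K) : Prop :=
  (∀ a b : K, d (a + b) = d a + d b) ∧
  (∀ a b : K, d (a * b) = a * d b + b * d a) ∧
  (∀ z ∈ D, d (j z) = j' z * d z ∧ d (j' z) = j'' z * d z ∧ d (j'' z) = j''' z * d z)

/-- The `j`-closure: the common kernel of all `j`-derivations vanishing on `C`. -/
def jcl (D : Set K) (j j' j'' j''' : K → K) (C : Set K) : Set K :=
  {a : K | ∀ d : K → K, IsJDerivation D j j' j'' j''' d → (∀ c ∈ C, d c = 0) → d a = 0}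

namespace IsJDerivation

variable {D : Set K} {j j' j'' j''' d : K → K} {z : K}

theorem map_zero (hd : IsJDerivation D j j' j'' j''' d) : d 0 = 0 := by
  have h := hd.1 0 0
  rwa [add_zero, left_eq_add] at h

theorem eq_zero_of_map_j''_eq_zero (hd : IsJDerivation D j j' j'' j''' d) (hz : z ∈ D)
    (h3 : j''' z ≠ 0) (h : d (j'' z) = 0) : d z = 0 := by
  have h' : j''' z * d z = 0 := (hd.2.2 z hz).2.2 ▸ h
  exact (mul_eq_zero.mp h').resolve_left h3

theorem eq_zero_of_map_j'_eq_zero (hd : IsJDerivation D j j' j'' j''' d) (hz : z ∈ D)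
    (h3 : j''' z ≠ 0) (h : d (j' z) = 0) : d z = 0 := by
  have h' : j'' z * d z = 0 := (hd.2.2 z hz).2.1 ▸ h
  rcases mul_eq_zero.mp h' with hj | hdz
  · exact hd.eq_zero_of_map_j''_eq_zero hz h3 (by rw [hj, hd.map_zero])
  · exact hdz

theorem eq_zero_of_map_j_eq_zero (hd : IsJDerivation D j j' j'' j''' d) (hz : z ∈ D)
    (h3 : j''' z ≠ 0) (h : d (j z) = 0) : d z = 0 := by
  have h' : j' z * d z = 0 := (hd.2.2 z hz).1 ▸ h
  rcases mul_eq_zero.mp h' with hj | hdz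
  · exact hd.eq_zero_of_map_j'_eq_zero hz h3 (by rw [hj, hd.map_zero])
  · exact hdz

end IsJDerivation

theorem stmt17_general (D : Set K) (j j' j'' j''' : K → K) (C : Set K)
    (hC : jcl D j j' j'' j''' C = C) (z : K) (hz : z ∈ D) (hz3 : j''' z ≠ 0)
    (h : j z ∈ C ∨ j' z ∈ C ∨ j'' z ∈ C) :
    z ∈ C := by
  rw [← hC]
  intro d hd hdC
  rcases h with h | h | h
  · exact hd.eq_zero_of_map_j_eq_zero hz hz3 (hdC _ h)
  · exact hd.eq_zero_of_map_j'_eq_zero hz hz3 (hdC _ h)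
  · exact hd.eq_zero_of_map_j''_eq_zero hz hz3 (hdC _ h)

theorem stmt17 [CharZero K] (D : Set K) (j j' j'' j''' : K → K) (C : Set K)
    (hC : jcl D j j' j'' j''' C = C) (z : K) (hz : z ∈ D) (hz3 : j''' z ≠ 0)
    (h : j z ∈ C ∨ j' z ∈ C ∨ j'' z ∈ C) :
    z ∈ C :=
  stmt17_general D j j' j'' j''' C hC z hz hz3 h
end
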